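/- Let 𝒵 be a noetherian abelian category and S any full subcategory of 𝒵. Then ([S], [S]°) is a torsion pair in 𝒵. -/

import Mathlib

/-! For an object `E`, noetherianity gives a subobject `T` maximal among those lying in `[S]`.
Since `[S]` is closed under quotients and extensions, for any `h : V ⟶ E ⧸ T` with `V ∈ [S]` the
pullback of `E ⟶ E ⧸ T` along `h`, an extension of `V` by `T`, lies in `[S]`, and so does its image
in `E`. That image contains `T`, hence equals it by maximality, which forces `h = 0`. -/

open CategoryTheory Limits Abelian

namespace TorsionPairs

universe w w' v u v' u'

variable {C : Type u} [Category.{v} C] [Abelian C]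

/-- `f : X ⟶ Y` and `g : Y ⟶ Z` form a short exact sequence `0 ⟶ X ⟶ Y ⟶ Z ⟶ 0` in `C`. -/
def IsShortExactSeq {X Y Z : C} (f : X ⟶ Y) (g : Y ⟶ Z) : Prop :=
  ∃ w : f ≫ g = 0, (ShortComplex.mk f g w).ShortExact

/-- The right perpendicular class `𝒱°` of a class of objects `𝒱` (given as a predicate):
the objects `E` with `Hom(V, E) = 0` for all `V ∈ 𝒱`. -/
def Perp (P : C → Prop) : C → Prop := fun E => ∀ (V : C), P V → ∀ f : V ⟶ E, f = 0

/-- A class of objects is closed under quotient objects. -/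
def ClosedUnderQuotients (P : C → Prop) : Prop :=
  ∀ ⦃X Q : C⦄ (p : X ⟶ Q), Epi p → P X → P Q

/-- A class of objects is closed under extensions. -/
def ClosedUnderExt (P : C → Prop) : Prop :=
  ∀ ⦃X E Y : C⦄ (f : X ⟶ E) (g : E ⟶ Y), IsShortExactSeq f g → P X → P Y → P E

/-- `(T, F)` is a torsion pair in the abelian category `C`: `Hom(X, Y) = 0` whenever
`T X` and `F Y`, and every object `E` fits into a short exact sequence
`0 ⟶ X ⟶ E ⟶ Y ⟶ 0` with `T X` and `F Y`. -/
def IsTorsionPair (T F : C → Prop) : Prop :=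
  (∀ (X Y : C), T X → F Y → ∀ f : X ⟶ Y, f = 0) ∧
  (∀ E : C, ∃ (X Y : C) (f : X ⟶ E) (g : E ⟶ Y), T X ∧ F Y ∧ IsShortExactSeq f g)

/-- The extension closure of a class of objects: the smallest class of objects containing
the zero objects and the given class, and closed under extensions. -/
inductive ExtClosure (P : C → Prop) : C → Prop
  | zero (X : C) (hX : IsZero X) : ExtClosure P X
  | of (X : C) (hX : P X) : ExtClosure P X
  | ext {X E Y : C} (f : X ⟶ E) (g : E ⟶ Y) (h : IsShortExactSeq f g)
      (hX : ExtClosure P X) (hY : ExtClosure P Y) : ExtClosure P E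

/-- The class of quotient objects of objects of `S`. -/
def QuotClass (S : C → Prop) : C → Prop := fun E => ∃ (E' : C) (p : E' ⟶ E), Epi p ∧ S E'

/-- `[S]`: the extension closure of the class of quotient objects of objects of `S`. -/
def ExtClosQuot (S : C → Prop) : C → Prop := ExtClosure (QuotClass S)

variable {P : C → Prop}

lemma isShortExactSeq_cokernel {X Y : C} (f : X ⟶ Y) [Mono f] :
    IsShortExactSeq f (cokernel.π f) :=
  ⟨cokernel.condition f, { exact := ShortComplex.exact_of_g_is_cokernel _ (cokernelIsCokernel f) }⟩

lemma exists_isShortExactSeq_of_isPullback {X E Y Q V : C} {f : X ⟶ E} {g : E ⟶ Y}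
    (hfg : IsShortExactSeq f g) {fst : Q ⟶ E} {snd : Q ⟶ V} {h : V ⟶ Y}
    (sq : IsPullback fst snd g h) :
    ∃ k : X ⟶ Q, k ≫ fst = f ∧ IsShortExactSeq k snd := by
  obtain ⟨w, hS⟩ := hfg
  have := hS.mono_f
  have := hS.epi_g
  have : Epi snd := MorphismProperty.of_isPullback (P := .epimorphisms C) sq ‹Epi g›
  obtain ⟨k, hkf, hk0⟩ := sq.exists_lift f 0 (by simpa using w)
  have : Mono k := mono_of_mono_fac hkf
  refine ⟨k, hkf, hk0, { exact := ?_ }⟩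
  rw [ShortComplex.exact_iff_exact_up_to_refinements]
  intro A x hx
  obtain ⟨A', π, hπ, x₁, hx₁⟩ := hS.exact.exact_up_to_refinements (x ≫ fst)
    (by simp [sq.w, reassoc_of% hx])
  exact ⟨A', π, hπ, x₁, sq.hom_ext (by simpa [hkf] using hx₁) (by simp [hx, hk0])⟩

lemma exists_isShortExactSeq_of_epi {X E Y Q : C} {f : X ⟶ E} {g : E ⟶ Y}
    (hfg : IsShortExactSeq f g) (p : E ⟶ Q) [Epi p] :
    ∃ (X' Y' : C) (f' : X' ⟶ Q) (g' : Q ⟶ Y'), IsShortExactSeq f' g' ∧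
      (∃ a : X ⟶ X', Epi a) ∧ ∃ b : Y ⟶ Y', Epi b := by
  obtain ⟨w, hS⟩ := hfg
  have := hS.epi_g
  let b := hS.gIsCokernel.desc (CokernelCofork.ofπ (p ≫ cokernel.π (Limits.image.ι (f ≫ p)))
    (by rw [← Category.assoc, ← Limits.image.fac_assoc (f ≫ p), cokernel.condition,
      comp_zero]))
  have hb : g ≫ b = p ≫ cokernel.π _ := Cofork.IsColimit.π_desc hS.gIsCokernel
  exact ⟨_, _, Limits.image.ι (f ≫ p), cokernel.π _, isShortExactSeq_cokernel _,
    ⟨factorThruImage (f ≫ p), inferInstance⟩, b, epi_of_epi_fac hb⟩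

omit [Abelian C] in
lemma closedUnderQuotients_quotClass (S : C → Prop) : ClosedUnderQuotients (QuotClass S) := by
  rintro X Q p hp ⟨E', p', hp', hE'⟩
  exact ⟨E', p' ≫ p, epi_comp p' p, hE'⟩

lemma ExtClosure.closedUnderExt : ClosedUnderExt (ExtClosure P) :=
  fun _ _ _ f g hfg hX hY => .ext f g hfg hX hY

lemma ExtClosure.closedUnderQuotients (hP : ClosedUnderQuotients P) :
    ClosedUnderQuotients (ExtClosure P) := by
  intro X Q p hp hX
  induction hX generalizing Q with
  | zero Z hZ => exact .zero Q (hZ.of_epi p)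
  | of Z hZ => exact .of Q (hP p hp hZ)
  | ext f g hfg _ _ ihX ihY =>
    obtain ⟨X', Y', f', g', hfg', ⟨a, ha⟩, b, hb⟩ := exists_isShortExactSeq_of_epi hfg p
    exact .ext f' g' hfg' (ihX a ha) (ihY b hb)

lemma perp_cokernel_arrow_of_maximal (hquot : ClosedUnderQuotients P)
    (hext : ClosedUnderExt P) {E : C} {T : Subobject E}
    (hT : Maximal (fun T : Subobject E => P T) T) : Perp P (cokernel T.arrow) := by
  intro V hV h
  obtain ⟨k, hk, hks⟩ := exists_isShortExactSeq_of_isPullback (isShortExactSeq_cokernel T.arrow)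
    (IsPullback.of_hasPullback (cokernel.π T.arrow) h)
  have := hks.2.epi_g
  set I := imageSubobject (pullback.fst (cokernel.π T.arrow) h)
  have hI : P I := hquot (factorThruImageSubobject _) inferInstance (hext _ _ hks hT.prop hV)
  have hIT : I ≤ T := hT.2 hI (Subobject.le_of_comm (k ≫ factorThruImageSubobject _)
    (by rw [Category.assoc, imageSubobject_arrow_comp, hk]))
  have hfst : pullback.fst (cokernel.π T.arrow) h ≫ cokernel.π T.arrow = 0 := by
    rw [← imageSubobject_arrow_comp (pullback.fst (cokernel.π T.arrow) h),
      ← Subobject.ofLE_arrow hIT]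
    simp only [Category.assoc, cokernel.condition, comp_zero]
  exact zero_of_epi_comp (pullback.snd _ _) (pullback.condition.symm.trans hfst)

theorem isTorsionPair_perp (hNoeth : ∀ X : C, IsNoetherianObject X)
    (hzero : ∀ X : C, IsZero X → P X) (hquot : ClosedUnderQuotients P)
    (hext : ClosedUnderExt P) : IsTorsionPair P (Perp P) := by
  refine ⟨fun X Y hX hY f => hY X hX f, fun E => ?_⟩
  obtain ⟨T, hT⟩ := exists_maximal_of_wellFoundedGT (fun T : Subobject E => P T)
    ⟨⊥, hzero _ ((isZero_zero C).of_iso Subobject.botCoeIsoZero)⟩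
  exact ⟨T, _, T.arrow, cokernel.π _, hT.prop, perp_cokernel_arrow_of_maximal hquot hext hT,
    isShortExactSeq_cokernel _⟩

/-- If `𝒵` is a noetherian abelian category and `S` is any full subcategory,
then `([S], [S]°)` is a torsion pair in `𝒵`. -/
theorem isTorsionPair_extClosQuot
    (hNoeth : ∀ X : C, IsNoetherianObject X) (S : C → Prop) :
    IsTorsionPair (ExtClosQuot S) (Perp (ExtClosQuot S)) :=
  isTorsionPair_perp hNoeth .zero
    (ExtClosure.closedUnderQuotients (closedUnderQuotients_quotClass S)) ExtClosure.closedUnderExt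

end TorsionPairs
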